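/- Assume the Riemann hypothesis. Let σ > 1/2, let 0 < δ ≤ 1/2, let ε > 0 be sufficiently small, and let t be real with −t > T + T^ε and T ≥ 2. Then ∑_{(−t−T)^δ < m ≤ (−t)^δ} ∑_{n < m} ((−t − m^{1/δ})/(2π)) · (m/n)^{it} · Λ(m/n) · (mn)^{−σ} · (m/n)^{−1/2} ≪ T^{2δ} + T^{1−εδ(σ−1/2)} if −t ≤ 2T, and ≪ (−t)^{2δ} + T·(−t)^{−δ(σ−1/2)} if −t > 2T, where m, n range over positive integers. -/

import Mathlib

/-!
Only the pairs with `n ∣ m` contribute to `D''`, and on the range of summation the weight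
`(-t - m ^ (1/δ)) / (2π)` lies in `[0, T / (2π)]`. Writing `m = n q`, the rest of the summand
has modulus `n ^ (-2σ) Λ(q) q ^ (-σ - 1/2)`, and partial summation against Chebyshev's bound
`ψ(x) ≪ x` gives `∑_{q > x} Λ(q) q ^ (-σ - 1/2) ≪ x ^ (-(σ - 1/2))`. Summing over `n` yields
`D'' ≪ T ((-t - T) ^ δ) ^ (-(σ - 1/2))`; the two cases follow from `-t - T > T ^ ε`,
respectively `-t - T > -t / 2`.
-/

open Complex Real

open Classical in
/-- The multiplicity (order of vanishing) of `riemannZeta` at a point. -/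
noncomputable def zetaZeroOrder (ρ : ℂ) : ℕ :=
  if h : AnalyticAt ℂ riemannZeta ρ then (analyticOrderAt riemannZeta ρ).toNat else 0

/-- The set of nontrivial zeros `ρ` of the Riemann zeta function with `a < Im ρ ≤ b`. -/
def zetaZerosIn (a b : ℝ) : Set ℂ :=
  {ρ : ℂ | riemannZeta ρ = 0 ∧ 0 ≤ ρ.re ∧ ρ.re ≤ 1 ∧ a < ρ.im ∧ ρ.im ≤ b}

/-- The sum of `f γ` over the imaginary parts `γ` of the nontrivial zeros of `riemannZeta`
with `a < γ ≤ b`, counted with multiplicity (real-valued version). -/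
noncomputable def zetaZeroSum (a b : ℝ) (f : ℝ → ℝ) : ℝ :=
  ∑ᶠ ρ ∈ zetaZerosIn a b, (zetaZeroOrder ρ : ℝ) * f ρ.im

/-- The sum of `f γ` over the imaginary parts `γ` of the nontrivial zeros of `riemannZeta`
with `a < γ ≤ b`, counted with multiplicity (complex-valued version). -/
noncomputable def zetaZeroSumC (a b : ℝ) (f : ℝ → ℂ) : ℂ :=
  ∑ᶠ ρ ∈ zetaZerosIn a b, (zetaZeroOrder ρ : ℂ) * f ρ.im

noncomputable def zetaMainTerm (σ t T : ℝ) : ℝ :=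
  (riemannZeta (2 * σ)).re * (T / (2 * π)) * Real.log (T / (2 * π * Real.exp 1)) +
    (riemannZeta (2 * σ)).re *
      (deriv riemannZeta (σ + 1 / 2 + t * I) / riemannZeta (σ + 1 / 2 + t * I)).re * (T / π)

/-- The von Mangoldt function extended to the reals: `ΛR x = Λ n` if `x = n` for a natural
number `n`, and `0` otherwise (in particular it vanishes unless `x` is a prime power). -/
noncomputable def vonMangoldtR (x : ℝ) : ℝ :=
  if (⌊x⌋₊ : ℝ) = x then ArithmeticFunction.vonMangoldt ⌊x⌋₊ else 0

/-- `⟨x⟩`: the distance from `x` to the nearest prime power other than `x` itself. -/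
noncomputable def primePowerGap (x : ℝ) : ℝ :=
  sInf {d : ℝ | ∃ q : ℕ, IsPrimePow q ∧ (q : ℝ) ≠ x ∧ d = |x - (q : ℝ)|}

/-- The double sum `D''` of formula (31) of the paper. -/
noncomputable def Dsum (σ δ t T : ℝ) : ℂ :=
  ∑ m ∈ Finset.Ioc ⌊(-t - T) ^ δ⌋₊ ⌊(-t) ^ δ⌋₊, ∑ n ∈ Finset.Ico 1 m,
    (((-t - (m : ℝ) ^ (1 / δ)) / (2 * π) * vonMangoldtR ((m : ℝ) / (n : ℝ)) *
        ((m : ℝ) * (n : ℝ)) ^ (-σ) * ((m : ℝ) / (n : ℝ)) ^ (-(1 / 2 : ℝ)) : ℝ) : ℂ) *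
      (((m : ℝ) / (n : ℝ) : ℝ) : ℂ) ^ ((t : ℂ) * I)

open Finset

section RpowNeg

variable {c : ℝ}

lemma rpow_neg_sub_mul_le_rpow_neg {x y : ℝ} (hx : 0 < x) (hy : 0 < y) (hc : 0 ≤ c) :
    x ^ (-c) - c * x ^ (-(c + 1)) * (y - x) ≤ y ^ (-c) := by
  have hz : 0 < y / x := div_pos hy hx
  have hbernoulli : 1 - c * (y / x - 1) ≤ (y / x) ^ (-c) := by
    rw [Real.rpow_def_of_pos hz]
    nlinarith [Real.add_one_le_exp (Real.log (y / x) * -c), Real.log_le_sub_one_of_pos hz]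
  have hsplit : y ^ (-c) = x ^ (-c) * (y / x) ^ (-c) := by
    rw [div_rpow hy.le hx.le, rpow_neg hy.le, rpow_neg hx.le]
    field_simp
  have hpred : x ^ (-(c + 1)) = x ^ (-c) / x := by
    rw [← rpow_sub_one hx.ne']
    ring_nf
  rw [hsplit, hpred]
  calc x ^ (-c) - c * (x ^ (-c) / x) * (y - x) = x ^ (-c) * (1 - c * (y / x - 1)) := by
        field_simp
    _ ≤ x ^ (-c) * (y / x) ^ (-c) := mul_le_mul_of_nonneg_left hbernoulli (by positivity)

lemma mul_rpow_neg_add_one {x : ℝ} (hx : 0 < x) : x * x ^ (-(c + 1)) = x ^ (-c) := by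
  rw [show -(c + 1) = -c - 1 by ring, rpow_sub_one hx.ne']
  field_simp

lemma mul_rpow_neg_sub_rpow_neg_le {x : ℝ} (hc : 0 ≤ c) (hx : 0 < x) :
    x * (x ^ (-c) - (x + 1) ^ (-c)) ≤ c * x ^ (-c) := by
  have htangent := rpow_neg_sub_mul_le_rpow_neg hx (by linarith : 0 < x + 1) hc
  have hdiff : x ^ (-c) - (x + 1) ^ (-c) ≤ c * x ^ (-(c + 1)) := by linarith
  calc x * (x ^ (-c) - (x + 1) ^ (-c)) ≤ x * (c * x ^ (-(c + 1))) :=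
        mul_le_mul_of_nonneg_left hdiff hx.le
    _ = c * x ^ (-c) := by rw [mul_left_comm, mul_rpow_neg_add_one hx]

lemma sum_Ioc_le_sub_of_le_sub {f g : ℕ → ℝ} {a : ℕ}
    (h : ∀ k, a ≤ k → g (k + 1) ≤ f k - f (k + 1)) {X : ℕ} (hX : a ≤ X) :
    ∑ k ∈ Ioc a X, g k ≤ f a - f X := by
  induction X, hX using Nat.le_induction with
  | base => simp
  | succ X hX ih =>
    rw [sum_Ioc_succ_top hX]
    linarith [h X hX]

lemma sum_Ioc_rpow_neg_le (hc : 0 < c) (a X : ℕ) :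
    ∑ k ∈ Ioc a X, (k : ℝ) ^ (-(c + 1)) ≤ (1 + 1 / c) * ((a : ℝ) + 1) ^ (-c) := by
  rcases le_or_gt X a with hXa | haX
  · rw [Ioc_eq_empty (by omega), sum_empty]
    positivity
  have hstep : ∀ k, a + 1 ≤ k → ((k + 1 : ℕ) : ℝ) ^ (-(c + 1)) ≤
      (k : ℝ) ^ (-c) / c - ((k + 1 : ℕ) : ℝ) ^ (-c) / c := by
    intro k hk
    have hk0 : (0 : ℝ) < k := by exact_mod_cast (show 0 < k by omega)
    have := rpow_neg_sub_mul_le_rpow_neg (by positivity : (0 : ℝ) < k + 1) hk0 hc.le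
    rw [← sub_div, le_div_iff₀ hc]
    push_cast
    nlinarith
  have hfirst : ((a + 1 : ℕ) : ℝ) ^ (-(c + 1)) ≤ ((a : ℝ) + 1) ^ (-c) := by
    push_cast
    exact rpow_le_rpow_of_exponent_le (by linarith [(a.cast_nonneg : (0 : ℝ) ≤ a)]) (by linarith)
  have htail := sum_Ioc_le_sub_of_le_sub (f := fun k : ℕ ↦ (k : ℝ) ^ (-c) / c)
    (g := fun k : ℕ ↦ (k : ℝ) ^ (-(c + 1))) hstep (show a + 1 ≤ X by omega)
  have hend : 0 ≤ (X : ℝ) ^ (-c) / c := by positivity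
  rw [← sum_Ioc_consecutive _ (Nat.le_succ a) (show a + 1 ≤ X by omega), Nat.Ioc_succ_singleton,
    sum_singleton]
  push_cast at hfirst htail ⊢
  rw [add_mul, one_mul, one_div_mul_eq_div]
  linarith

end RpowNeg

section VonMangoldtTail

open ArithmeticFunction

lemma sum_range_succ_vonMangoldt_le (i : ℕ) :
    ∑ j ∈ range (i + 1), Λ j ≤ (Real.log 4 + 4) * i := by
  have := Chebyshev.psi_le_const_mul_self (x := i) i.cast_nonneg
  rwa [Chebyshev.psi_eq_sum_Icc, Nat.floor_natCast, ← Nat.range_succ_eq_Icc_zero] at this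

lemma sum_Ioc_rpow_neg_mul_vonMangoldt_le {s : ℝ} (hs : 0 < s) (a X : ℕ) :
    ∑ q ∈ Ioc a X, (q : ℝ) ^ (-(s + 1)) * Λ q ≤
      (Real.log 4 + 4) * (1 + (s + 1) * (1 + 1 / s)) * ((a : ℝ) + 1) ^ (-s) := by
  rcases le_or_gt X a with hXa | haX
  · rw [Ioc_eq_empty (by omega), sum_empty]
    positivity
  set C := Real.log 4 + 4
  set f : ℕ → ℝ := fun k ↦ (k : ℝ) ^ (-(s + 1))
  have hC : 0 ≤ C := by positivity
  have hparts := sum_Ioc_by_parts f (fun q ↦ Λ q) haX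
  simp only [smul_eq_mul] at hparts
  have hfirst : 0 ≤ f (a + 1) * ∑ j ∈ range (a + 1), Λ j :=
    mul_nonneg (by positivity) (sum_nonneg fun j _ ↦ vonMangoldt_nonneg)
  have hX : (0 : ℝ) < X := by exact_mod_cast (show 0 < X by omega)
  have hlast : f X * ∑ j ∈ range (X + 1), Λ j ≤ C * ((a : ℝ) + 1) ^ (-s) :=
    calc f X * ∑ j ∈ range (X + 1), Λ j ≤ f X * (C * X) :=
          mul_le_mul_of_nonneg_left (sum_range_succ_vonMangoldt_le X) (by positivity)
      _ = C * (X : ℝ) ^ (-s) := by rw [← mul_rpow_neg_add_one hX]; ring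
      _ ≤ C * ((a : ℝ) + 1) ^ (-s) := by
          refine mul_le_mul_of_nonneg_left (rpow_le_rpow_of_nonpos (by positivity) ?_
            (by linarith)) hC
          exact_mod_cast haX
  have hmid : ∑ i ∈ Ioc a (X - 1), -((f (i + 1) - f i) * ∑ j ∈ range (i + 1), Λ j) ≤
      C * (s + 1) * ((1 + 1 / s) * ((a : ℝ) + 1) ^ (-s)) := by
    calc _ ≤ ∑ i ∈ Ioc a (X - 1), C * (s + 1) * (i : ℝ) ^ (-(s + 1)) := by
          refine sum_le_sum fun i hi ↦ ?_
          have hi0 : (0 : ℝ) < i := by exact_mod_cast (show 0 < i by grind)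
          have hdecr : 0 ≤ f i - f (i + 1) := by
            simp only [f, Nat.cast_add_one]
            exact sub_nonneg.mpr (rpow_le_rpow_of_nonpos hi0 (by linarith) (by linarith))
          calc -((f (i + 1) - f i) * ∑ j ∈ range (i + 1), Λ j)
              ≤ (f i - f (i + 1)) * (C * i) := by
                rw [← neg_mul, neg_sub]
                exact mul_le_mul_of_nonneg_left (sum_range_succ_vonMangoldt_le i) hdecr
            _ = C * (i * (f i - f (i + 1))) := by ring
            _ ≤ C * ((s + 1) * (i : ℝ) ^ (-(s + 1))) := by
                simp only [f, Nat.cast_add_one]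
                exact mul_le_mul_of_nonneg_left
                  (mul_rpow_neg_sub_rpow_neg_le (by linarith) hi0) hC
            _ = C * (s + 1) * (i : ℝ) ^ (-(s + 1)) := by ring
      _ ≤ _ := by
          rw [← mul_sum]
          exact mul_le_mul_of_nonneg_left (sum_Ioc_rpow_neg_le hs a (X - 1)) (by positivity)
  rw [hparts, sub_eq_add_neg _ (∑ i ∈ _, _), ← sum_neg_distrib]
  nlinarith

end VonMangoldtTail

section Coefficients

open ArithmeticFunction

lemma vonMangoldtR_nonneg (x : ℝ) : 0 ≤ vonMangoldtR x := by
  unfold vonMangoldtR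
  split_ifs
  exacts [vonMangoldt_nonneg, le_rfl]

lemma vonMangoldtR_natCast (q : ℕ) : vonMangoldtR q = Λ q := by
  simp [vonMangoldtR]

lemma vonMangoldtR_div_of_not_dvd {m n : ℕ} (h : ¬ n ∣ m) :
    vonMangoldtR ((m : ℝ) / (n : ℝ)) = 0 := by
  rcases n.eq_zero_or_pos with rfl | hn
  · simp [vonMangoldtR]
  rw [vonMangoldtR, Nat.floor_div_eq_div, if_neg]
  intro heq
  have : ((m / n : ℕ) : ℝ) * n = m := by rw [heq]; field_simp
  exact h (Dvd.intro_left _ (by exact_mod_cast this))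

/-- The summand of `Dsum` without its weight `(-t - m ^ (1 / δ)) / (2π)` and its unimodular
factor `(m / n) ^ (i t)`. -/
noncomputable def dsumCoeff (σ : ℝ) (m n : ℕ) : ℝ :=
  vonMangoldtR ((m : ℝ) / (n : ℝ)) * ((m : ℝ) * (n : ℝ)) ^ (-σ) *
    ((m : ℝ) / (n : ℝ)) ^ (-(1 / 2 : ℝ))

variable {σ : ℝ}

lemma dsumCoeff_nonneg (m n : ℕ) : 0 ≤ dsumCoeff σ m n :=
  mul_nonneg (mul_nonneg (vonMangoldtR_nonneg _) (by positivity)) (by positivity)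

lemma dsumCoeff_of_not_dvd {m n : ℕ} (h : ¬ n ∣ m) : dsumCoeff σ m n = 0 := by
  rw [dsumCoeff, vonMangoldtR_div_of_not_dvd h, zero_mul, zero_mul]

lemma dsumCoeff_mul_left {n : ℕ} (hn : 0 < n) (q : ℕ) :
    dsumCoeff σ (n * q) n = (n : ℝ) ^ (-(2 * σ)) * ((q : ℝ) ^ (-(σ - 1 / 2 + 1)) * Λ q) := by
  rcases q.eq_zero_or_pos with rfl | hq
  · simp [dsumCoeff, vonMangoldtR]
  have hn' : (0 : ℝ) < n := by exact_mod_cast hn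
  have hq' : (0 : ℝ) < q := by exact_mod_cast hq
  have hdiv : ((n * q : ℕ) : ℝ) / n = q := by push_cast; field_simp
  have hprod : ((n * q : ℕ) : ℝ) * n = (n : ℝ) ^ (2 : ℝ) * q := by rw [rpow_two]; push_cast; ring
  rw [dsumCoeff, hdiv, vonMangoldtR_natCast, hprod, mul_rpow (by positivity) hq'.le,
    ← rpow_mul hn'.le]
  have hq_exp : (q : ℝ) ^ (-σ) * (q : ℝ) ^ (-(1 / 2 : ℝ)) = (q : ℝ) ^ (-(σ - 1 / 2 + 1)) := by
    rw [← rpow_add hq']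
    ring_nf
  rw [show (2 : ℝ) * -σ = -(2 * σ) by ring, ← hq_exp]
  ring

end Coefficients

lemma sum_Ioc_eq_sum_Ioc_div_mul {M : Type*} [AddCommMonoid M] {f : ℕ → M} {n : ℕ} (hn : 0 < n)
    (hf : ∀ m, ¬ n ∣ m → f m = 0) (A B : ℕ) :
    ∑ m ∈ Ioc A B, f m = ∑ q ∈ Ioc (A / n) (B / n), f (n * q) := by
  let mulLeft : ℕ ↪ ℕ := ⟨(n * ·), mul_right_injective₀ hn.ne'⟩
  have hmaps : (Ioc (A / n) (B / n)).map mulLeft ⊆ Ioc A B := by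
    intro m hm
    obtain ⟨q, hq, rfl⟩ := mem_map.mp hm
    rw [mem_Ioc, Nat.div_lt_iff_lt_mul hn, Nat.le_div_iff_mul_le hn] at hq
    simp only [mulLeft, Function.Embedding.coeFn_mk, mem_Ioc]
    constructor <;> linarith [mul_comm n q]
  change _ = ∑ q ∈ Ioc (A / n) (B / n), f (mulLeft q)
  rw [← sum_map _ mulLeft f]
  refine (sum_subset hmaps fun m hm hmiss ↦ hf m fun ⟨q, hq⟩ ↦ hmiss ?_).symm
  subst hq
  rw [mem_Ioc] at hm
  refine mem_map.mpr ⟨q, ?_, rfl⟩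
  rw [mem_Ioc, Nat.div_lt_iff_lt_mul hn, Nat.le_div_iff_mul_le hn]
  constructor <;> linarith [mul_comm n q]

lemma rpow_neg_div_add_one_le {s : ℝ} (hs : 0 ≤ s) (A : ℕ) {n : ℕ} (hn : 0 < n) :
    (((A / n : ℕ) : ℝ) + 1) ^ (-s) ≤ ((A : ℝ) + 1) ^ (-s) * (n : ℝ) ^ s := by
  have hn' : (0 : ℝ) < n := by exact_mod_cast hn
  have hle : ((A : ℝ) + 1) / n ≤ ((A / n : ℕ) : ℝ) + 1 := by
    rw [div_le_iff₀ hn']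
    have hfloor : A + 1 ≤ (A / n + 1) * n := by
      rw [add_one_mul]
      exact Nat.lt_div_mul_add hn
    exact_mod_cast hfloor
  calc (((A / n : ℕ) : ℝ) + 1) ^ (-s) ≤ (((A : ℝ) + 1) / n) ^ (-s) :=
        rpow_le_rpow_of_nonpos (by positivity) hle (by linarith)
    _ = ((A : ℝ) + 1) ^ (-s) * (n : ℝ) ^ s := by
        rw [div_rpow (by positivity) hn'.le, rpow_neg hn'.le, div_inv_eq_mul]

open ArithmeticFunction in
lemma sum_dsumCoeff_le {σ : ℝ} (hσ : 1 / 2 < σ) :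
    ∃ K > 0, ∀ A B : ℕ, ∑ m ∈ Ioc A B, ∑ n ∈ Ico 1 m, dsumCoeff σ m n ≤
      K * ((A : ℝ) + 1) ^ (-(σ - 1 / 2)) := by
  set s := σ - 1 / 2
  have hs : 0 < s := sub_pos.mpr hσ
  set C := (Real.log 4 + 4) * (1 + (s + 1) * (1 + 1 / s))
  refine ⟨C * (1 + 1 / s), by positivity, fun A B ↦ ?_⟩
  have hinner : ∀ n ∈ Ioc 0 B, ∑ m ∈ Ioc A B, dsumCoeff σ m n ≤
      C * ((A : ℝ) + 1) ^ (-s) * (n : ℝ) ^ (-(s + 1)) := by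
    intro n hnB
    have hn : 0 < n := (mem_Ioc.mp hnB).1
    have hn' : (0 : ℝ) < n := by exact_mod_cast hn
    rw [sum_Ioc_eq_sum_Ioc_div_mul hn (fun m ↦ dsumCoeff_of_not_dvd) A B]
    simp_rw [dsumCoeff_mul_left hn, ← mul_sum]
    calc (n : ℝ) ^ (-(2 * σ)) * ∑ q ∈ Ioc (A / n) (B / n), (q : ℝ) ^ (-(s + 1)) * Λ q
        ≤ (n : ℝ) ^ (-(2 * σ)) * (C * ((A : ℝ) + 1) ^ (-s) * (n : ℝ) ^ s) := by
          refine mul_le_mul_of_nonneg_left ?_ (by positivity)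
          calc _ ≤ C * (((A / n : ℕ) : ℝ) + 1) ^ (-s) := sum_Ioc_rpow_neg_mul_vonMangoldt_le hs _ _
            _ ≤ C * (((A : ℝ) + 1) ^ (-s) * (n : ℝ) ^ s) :=
                mul_le_mul_of_nonneg_left (rpow_neg_div_add_one_le hs.le A hn) (by positivity)
            _ = _ := by ring
      _ = C * ((A : ℝ) + 1) ^ (-s) * (n : ℝ) ^ (-(s + 1)) := by
          rw [mul_comm, mul_assoc, ← rpow_add hn', show s + -(2 * σ) = -(s + 1) by ring]
  calc ∑ m ∈ Ioc A B, ∑ n ∈ Ico 1 m, dsumCoeff σ m n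
      ≤ ∑ m ∈ Ioc A B, ∑ n ∈ Ioc 0 B, dsumCoeff σ m n := by
        refine sum_le_sum fun m hm ↦ sum_le_sum_of_subset_of_nonneg ?_ fun _ _ _ ↦
          dsumCoeff_nonneg _ _
        intro n hn
        grind
    _ = ∑ n ∈ Ioc 0 B, ∑ m ∈ Ioc A B, dsumCoeff σ m n := sum_comm
    _ ≤ ∑ n ∈ Ioc 0 B, C * ((A : ℝ) + 1) ^ (-s) * (n : ℝ) ^ (-(s + 1)) := sum_le_sum hinner
    _ ≤ C * ((A : ℝ) + 1) ^ (-s) * (1 + 1 / s) := by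
        rw [← mul_sum]
        gcongr
        simpa using sum_Ioc_rpow_neg_le hs 0 B
    _ = C * (1 + 1 / s) * ((A : ℝ) + 1) ^ (-s) := by ring

lemma lt_rpow_one_div_le_of_mem_Ioc_floor {δ x y : ℝ} (hδ : 0 < δ) (hx : 0 ≤ x) (hy : 0 ≤ y)
    {m : ℕ} (hm : m ∈ Ioc ⌊x ^ δ⌋₊ ⌊y ^ δ⌋₊) :
    x < (m : ℝ) ^ (1 / δ) ∧ (m : ℝ) ^ (1 / δ) ≤ y := by
  rw [mem_Ioc, Nat.floor_lt (by positivity), Nat.le_floor_iff (by positivity)] at hm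
  rw [one_div]
  exact ⟨(lt_rpow_inv_iff_of_pos hx m.cast_nonneg hδ).mpr hm.1,
    (rpow_inv_le_iff_of_pos m.cast_nonneg hy hδ).mpr hm.2⟩

lemma norm_Dsum_le {σ δ t T : ℝ} (hδ : 0 < δ) (hT : 0 ≤ T) (htT : T ≤ -t) :
    ‖Dsum σ δ t T‖ ≤
      T / (2 * π) * ∑ m ∈ Ioc ⌊(-t - T) ^ δ⌋₊ ⌊(-t) ^ δ⌋₊, ∑ n ∈ Ico 1 m, dsumCoeff σ m n := by
  rw [Dsum, mul_sum]
  refine (norm_sum_le _ _).trans (sum_le_sum fun m hm ↦ ?_)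
  rw [mul_sum]
  refine (norm_sum_le _ _).trans (sum_le_sum fun n hn ↦ ?_)
  obtain ⟨hlow, hhigh⟩ := lt_rpow_one_div_le_of_mem_Ioc_floor hδ (by linarith) (by linarith) hm
  have hratio : (0 : ℝ) < (m : ℝ) / (n : ℝ) := by
    obtain ⟨h1, h2⟩ := mem_Ico.mp hn
    exact div_pos (by exact_mod_cast (by omega : 0 < m)) (by exact_mod_cast h1)
  have hterm : (-t - (m : ℝ) ^ (1 / δ)) / (2 * π) * vonMangoldtR ((m : ℝ) / (n : ℝ)) *
      ((m : ℝ) * (n : ℝ)) ^ (-σ) * ((m : ℝ) / (n : ℝ)) ^ (-(1 / 2 : ℝ)) =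
      (-t - (m : ℝ) ^ (1 / δ)) / (2 * π) * dsumCoeff σ m n := by
    rw [dsumCoeff]
    ring
  have hweight : 0 ≤ (-t - (m : ℝ) ^ (1 / δ)) / (2 * π) := div_nonneg (by linarith) (by positivity)
  rw [hterm, norm_mul, norm_cpow_eq_rpow_re_of_pos hratio, Complex.norm_real,
    Real.norm_of_nonneg (mul_nonneg hweight (dsumCoeff_nonneg m n))]
  simp only [mul_re, ofReal_re, I_re, mul_zero, ofReal_im, I_im, mul_one, sub_self, rpow_zero]
  gcongr
  · exact dsumCoeff_nonneg m n
  · linarith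

lemma norm_Dsum_le_mul_rpow {σ δ : ℝ} (hσ : 1 / 2 < σ) (hδ : 0 < δ) :
    ∃ K > 0, ∀ T t : ℝ, 0 ≤ T → T < -t →
      ‖Dsum σ δ t T‖ ≤ K * (T * (-t - T) ^ (-(δ * (σ - 1 / 2)))) := by
  obtain ⟨K, hK, hsum⟩ := sum_dsumCoeff_le hσ
  refine ⟨K / (2 * π), by positivity, fun T t hT htT ↦ ?_⟩
  have hgap : 0 < -t - T := by linarith
  have hfloor : (((⌊(-t - T) ^ δ⌋₊ : ℕ) : ℝ) + 1) ^ (-(σ - 1 / 2)) ≤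
      (-t - T) ^ (-(δ * (σ - 1 / 2))) := by
    rw [show -(δ * (σ - 1 / 2)) = δ * -(σ - 1 / 2) by ring, rpow_mul hgap.le]
    exact rpow_le_rpow_of_nonpos (by positivity) (Nat.lt_floor_add_one _).le (by linarith)
  calc ‖Dsum σ δ t T‖
      ≤ T / (2 * π) * (K * (((⌊(-t - T) ^ δ⌋₊ : ℕ) : ℝ) + 1) ^ (-(σ - 1 / 2))) :=
        (norm_Dsum_le hδ hT htT.le).trans
          (mul_le_mul_of_nonneg_left (hsum _ _) (by positivity))
    _ ≤ T / (2 * π) * (K * (-t - T) ^ (-(δ * (σ - 1 / 2)))) := by gcongr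
    _ = K / (2 * π) * (T * (-t - T) ^ (-(δ * (σ - 1 / 2)))) := by ring

theorem Dsum_bound_general
    (σ : ℝ) (hσ : 1 / 2 < σ) (δ : ℝ) (hδ0 : 0 < δ) :
    ∃ ε₀ > 0, ∀ ε : ℝ, 0 < ε → ε ≤ ε₀ → ∃ C > 0, ∀ T : ℝ, 2 ≤ T → ∀ t : ℝ,
      T + T ^ ε < -t →
      (-t ≤ 2 * T → ‖Dsum σ δ t T‖ ≤ C * (T ^ (2 * δ) + T ^ (1 - ε * δ * (σ - 1 / 2)))) ∧
      (2 * T < -t →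
        ‖Dsum σ δ t T‖ ≤ C * ((-t) ^ (2 * δ) + T * (-t) ^ (-(δ * (σ - 1 / 2))))) := by
  obtain ⟨K, hK, hD⟩ := norm_Dsum_le_mul_rpow hσ hδ0
  set e := δ * (σ - 1 / 2)
  have he : 0 ≤ e := mul_nonneg hδ0.le (by linarith)
  have hK2 : K ≤ K * 2 ^ e := le_mul_of_one_le_right hK.le (one_le_rpow one_le_two he)
  refine ⟨1, one_pos, fun ε _ _ ↦ ⟨K * 2 ^ e, by positivity, fun T hT t ht ↦ ?_⟩⟩
  have hT0 : 0 < T := by linarith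
  have hTε : 0 < T ^ ε := rpow_pos_of_pos hT0 ε
  have hD' := hD T t hT0.le (by linarith)
  constructor
  · intro _
    have hgap : (-t - T) ^ (-e) ≤ (T ^ ε) ^ (-e) :=
      rpow_le_rpow_of_nonpos hTε (by linarith) (by linarith)
    calc ‖Dsum σ δ t T‖ ≤ K * (T * (T ^ ε) ^ (-e)) := hD'.trans (by gcongr)
      _ = K * T ^ (1 - ε * δ * (σ - 1 / 2)) := by
          rw [← rpow_mul hT0.le, show 1 - ε * δ * (σ - 1 / 2) = 1 + ε * -e by ring,
            rpow_add hT0, rpow_one]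
      _ ≤ K * 2 ^ e * (T ^ (2 * δ) + T ^ (1 - ε * δ * (σ - 1 / 2))) := by
          gcongr
          exact le_add_of_nonneg_left (by positivity)
  · intro h2T
    have ht0 : 0 < -t := by linarith
    have hgap : (-t - T) ^ (-e) ≤ (-t / 2) ^ (-e) :=
      rpow_le_rpow_of_nonpos (by positivity) (by linarith) (by linarith)
    calc ‖Dsum σ δ t T‖ ≤ K * (T * (-t / 2) ^ (-e)) := hD'.trans (by gcongr)
      _ = K * 2 ^ e * (T * (-t) ^ (-e)) := by
          rw [div_rpow ht0.le zero_le_two, rpow_neg zero_le_two, div_inv_eq_mul]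
          ring
      _ ≤ K * 2 ^ e * ((-t) ^ (2 * δ) + T * (-t) ^ (-e)) := by
          gcongr
          exact le_add_of_nonneg_left (by positivity)

/-- The bound (35) on `D''`: assume RH; for `σ > 1/2`, `0 < δ ≤ 1/2`, sufficiently small
`ε > 0`, and `-t > T + T^ε`:
`D'' ≪ T^{2δ} + T^{1-εδ(σ-1/2)}` if `-t ≤ 2T`, and `D'' ≪ (-t)^{2δ} + T(-t)^{-δ(σ-1/2)}`
if `-t > 2T`. -/
theorem Dsum_bound (hRH : RiemannHypothesis)
    (σ : ℝ) (hσ : 1 / 2 < σ) (δ : ℝ) (hδ0 : 0 < δ) (hδ1 : δ ≤ 1 / 2) :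
    ∃ ε₀ > 0, ∀ ε : ℝ, 0 < ε → ε ≤ ε₀ → ∃ C > 0, ∀ T : ℝ, 2 ≤ T → ∀ t : ℝ,
      T + T ^ ε < -t →
      (-t ≤ 2 * T → ‖Dsum σ δ t T‖ ≤ C * (T ^ (2 * δ) + T ^ (1 - ε * δ * (σ - 1 / 2)))) ∧
      (2 * T < -t →
        ‖Dsum σ δ t T‖ ≤ C * ((-t) ^ (2 * δ) + T * (-t) ^ (-(δ * (σ - 1 / 2))))) :=
  Dsum_bound_general σ hσ δ hδ0
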